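/- arXiv:1602.03311 — 10 statements merged into one kernel-verified Lean document; each statement's English description precedes it below -/
import Mathlib

section
/- Let A be an n×n pairwise comparison matrix (n ≥ 3) and w a positive weight vector. Then w is efficient for A if and only if w is internally efficient for A; i.e., a dominating positive weight vector w′ exists if and only if an internally dominating positive weight vector exists. -/
/-!
If `w'` dominates `w`, move from `w` towards `w'` along the segment `(1 - t) • w + t • w'`.
For `0 < t < 1` each ratio `w_i / w_j` moves, if at all, in the same direction as it does for
`w'`, which by dominance is towards `a_ij` whenever it moves; and for small `t` it does not overshoot
`a_ij`. So a point near `w` on the segment internally dominates `w`. Conversely, a ratio lying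
between `a_ij` and its old value is at least as close to `a_ij`.
-/

open Filter Topology Set
open scoped Interval

section Ratio

variable {a x y : ℝ}

theorem mem_uIcc_iff_imp_and_imp :
    y ∈ [[a, x]] ↔ (a ≤ x → a ≤ y ∧ y ≤ x) ∧ (a ≥ x → a ≥ y ∧ y ≥ x) := by
  rw [mem_uIcc]
  constructor
  · rintro (⟨hay, hyx⟩ | ⟨hxy, hya⟩)
    · exact ⟨fun _ => ⟨hay, hyx⟩, fun hxa => ⟨by linarith, by linarith⟩⟩
    · exact ⟨fun hax => ⟨by linarith, by linarith⟩, fun _ => ⟨hya, hxy⟩⟩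
  · rintro ⟨hle, hge⟩
    rcases le_total a x with hax | hxa
    · exact Or.inl (hle hax)
    · exact Or.inr (hge hxa).symm

theorem ne_iff_of_mem_uIcc (hy : y ∈ [[a, x]]) :
    ((a ≤ x ∧ y < x) ∨ (a ≥ x ∧ y > x)) ↔ y ≠ x := by
  constructor
  · rintro (⟨-, hyx⟩ | ⟨-, hxy⟩)
    exacts [hyx.ne, hxy.ne']
  · intro hne
    rcases mem_uIcc.1 hy with ⟨hay, hyx⟩ | ⟨hxy, hya⟩
    · exact Or.inl ⟨hay.trans hyx, lt_of_le_of_ne hyx hne⟩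
    · exact Or.inr ⟨hxy.trans hya, lt_of_le_of_ne hxy hne.symm⟩

theorem abs_sub_le_of_mem_uIcc (hy : y ∈ [[a, x]]) : |a - y| ≤ |a - x| :=
  abs_sub_right_of_mem_uIcc (uIcc_comm a x ▸ hy)

theorem abs_sub_lt_of_mem_uIcc_of_ne (hy : y ∈ [[a, x]]) (hne : y ≠ x) : |a - y| < |a - x| := by
  rcases mem_uIcc.1 hy with ⟨hay, hyx⟩ | ⟨hxy, hya⟩
  · rw [abs_of_nonpos (sub_nonpos.2 hay), abs_of_nonpos (sub_nonpos.2 (hay.trans hyx))]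
    linarith [lt_of_le_of_ne hyx hne]
  · rw [abs_of_nonneg (sub_nonneg.2 hya), abs_of_nonneg (sub_nonneg.2 (hxy.trans hya))]
    linarith [lt_of_le_of_ne hxy hne.symm]

theorem eventually_mem_uIcc_of_abs_sub_le {x' : ℝ} {y : ℝ → ℝ} {l : Filter ℝ}
    (hy : Tendsto y l (𝓝 x)) (hside : ∀ᶠ t in l, (y t < x ↔ x' < x) ∧ (x < y t ↔ x < x'))
    (h : |a - x'| ≤ |a - x|) : ∀ᶠ t in l, y t ∈ [[a, x]] := by
  rcases lt_trichotomy a x with hax | rfl | hxa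
  · have hx' : ¬ x < x' := fun hxx' => by
      rw [abs_of_neg (sub_neg.2 (hax.trans hxx')), abs_of_neg (sub_neg.2 hax)] at h
      linarith
    filter_upwards [hside, hy.eventually (lt_mem_nhds hax)] with t ht hat
    exact mem_uIcc.2 (Or.inl ⟨hat.le, not_lt.1 (mt ht.2.1 hx')⟩)
  · have hx' : x' = a := (sub_eq_zero.1 (abs_nonpos_iff.1 (by simpa using h))).symm
    filter_upwards [hside] with t ht
    rw [uIcc_self, mem_singleton_iff]
    exact le_antisymm (not_lt.1 (mt ht.2.1 hx'.not_gt)) (not_lt.1 (mt ht.1.1 hx'.not_lt))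
  · have hx' : ¬ x' < x := fun hx'x => by
      rw [abs_of_pos (sub_pos.2 (hx'x.trans hxa)), abs_of_pos (sub_pos.2 hxa)] at h
      linarith
    filter_upwards [hside, hy.eventually (gt_mem_nhds hxa)] with t ht hta
    exact mem_uIcc.2 (Or.inr ⟨not_lt.1 (mt ht.1.1 hx'), hta.le⟩)

end Ratio

section ConvexCombination

variable {p q p' q' t : ℝ}

theorem convexComb_pos (hq : 0 < q) (hq' : 0 < q') (ht₀ : 0 < t) (ht₁ : t < 1) :
    0 < (1 - t) * q + t * q' :=
  add_pos_of_nonneg_of_pos (mul_nonneg (sub_nonneg.2 ht₁.le) hq.le) (mul_pos ht₀ hq')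

theorem convexComb_div_lt_div_iff (hq : 0 < q) (hq' : 0 < q') (ht₀ : 0 < t) (ht₁ : t < 1) :
    ((1 - t) * p + t * p') / ((1 - t) * q + t * q') < p / q ↔ p' / q' < p / q := by
  rw [div_lt_div_iff₀ (convexComb_pos hq hq' ht₀ ht₁) hq, div_lt_div_iff₀ hq' hq]
  have key : ((1 - t) * p + t * p') * q - p * ((1 - t) * q + t * q') = t * (p' * q - p * q') := by
    ring
  constructor <;> intro h <;> nlinarith

theorem div_lt_convexComb_div_iff (hq : 0 < q) (hq' : 0 < q') (ht₀ : 0 < t) (ht₁ : t < 1) :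
    p / q < ((1 - t) * p + t * p') / ((1 - t) * q + t * q') ↔ p / q < p' / q' := by
  rw [div_lt_div_iff₀ hq (convexComb_pos hq hq' ht₀ ht₁), div_lt_div_iff₀ hq hq']
  have key : ((1 - t) * p + t * p') * q - p * ((1 - t) * q + t * q') = t * (p' * q - p * q') := by
    ring
  constructor <;> intro h <;> nlinarith

theorem tendsto_convexComb_div (hq : 0 < q) :
    Tendsto (fun t => ((1 - t) * p + t * p') / ((1 - t) * q + t * q')) (𝓝[>] 0) (𝓝 (p / q)) := by
  have hcont : ContinuousAt (fun t : ℝ => ((1 - t) * p + t * p') / ((1 - t) * q + t * q')) 0 :=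
    ContinuousAt.div (by fun_prop) (by fun_prop) (by simpa using hq.ne')
  simpa using hcont.tendsto.mono_left nhdsWithin_le_nhds

end ConvexCombination

section Dominance

variable {ι : Type*} (A : Matrix ι ι ℝ) (w' w : ι → ℝ)

def Dominates : Prop :=
  (∀ i, 0 < w' i) ∧
    (∀ i j, |A i j - w' i / w' j| ≤ |A i j - w i / w j|) ∧
    (∃ k l, |A k l - w' k / w' l| < |A k l - w k / w l|)

def InternallyDominates : Prop :=
  (∀ i, 0 < w' i) ∧
    (∀ i j, (A i j ≤ w i / w j → A i j ≤ w' i / w' j ∧ w' i / w' j ≤ w i / w j) ∧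
            (A i j ≥ w i / w j → A i j ≥ w' i / w' j ∧ w' i / w' j ≥ w i / w j)) ∧
    (∃ k l, (A k l ≤ w k / w l ∧ w' k / w' l < w k / w l) ∨
            (A k l ≥ w k / w l ∧ w' k / w' l > w k / w l))

variable {A w' w}

theorem internallyDominates_iff : InternallyDominates A w' w ↔
    (∀ i, 0 < w' i) ∧ (∀ i j, w' i / w' j ∈ [[A i j, w i / w j]]) ∧
      ∃ k l, w' k / w' l ≠ w k / w l := by
  simp only [InternallyDominates, ← mem_uIcc_iff_imp_and_imp]
  constructor
  · rintro ⟨hpos, hmem, k, l, hkl⟩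
    exact ⟨hpos, hmem, k, l, (ne_iff_of_mem_uIcc (hmem k l)).1 hkl⟩
  · rintro ⟨hpos, hmem, k, l, hkl⟩
    exact ⟨hpos, hmem, k, l, (ne_iff_of_mem_uIcc (hmem k l)).2 hkl⟩

theorem InternallyDominates.dominates (h : InternallyDominates A w' w) : Dominates A w' w := by
  obtain ⟨hpos, hmem, k, l, hkl⟩ := internallyDominates_iff.1 h
  exact ⟨hpos, fun i j => abs_sub_le_of_mem_uIcc (hmem i j), k, l,
    abs_sub_lt_of_mem_uIcc_of_ne (hmem k l) hkl⟩

theorem exists_internallyDominates_of_dominates [Finite ι] (hw : ∀ i, 0 < w i)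
    (h : Dominates A w' w) : ∃ w'', InternallyDominates A w'' w := by
  obtain ⟨hw', hle, k, l, hkl⟩ := h
  set W : ℝ → ι → ℝ := fun t i => (1 - t) * w i + t * w' i
  have hside : ∀ i j, ∀ t ∈ Ioo (0 : ℝ) 1,
      (W t i / W t j < w i / w j ↔ w' i / w' j < w i / w j) ∧
        (w i / w j < W t i / W t j ↔ w i / w j < w' i / w' j) := fun i j t ht =>
    ⟨convexComb_div_lt_div_iff (hw j) (hw' j) ht.1 ht.2,
      div_lt_convexComb_div_iff (hw j) (hw' j) ht.1 ht.2⟩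
  have hIoo : ∀ᶠ t in 𝓝[>] (0 : ℝ), t ∈ Ioo 0 1 := Ioo_mem_nhdsGT one_pos
  have hmem : ∀ᶠ t in 𝓝[>] (0 : ℝ), ∀ i j, W t i / W t j ∈ [[A i j, w i / w j]] :=
    eventually_all.2 fun i => eventually_all.2 fun j =>
      eventually_mem_uIcc_of_abs_sub_le (tendsto_convexComb_div (hw j))
        (hIoo.mono (hside i j)) (hle i j)
  obtain ⟨t, ht, hmem⟩ := (hIoo.and hmem).exists
  refine ⟨W t, internallyDominates_iff.2
    ⟨fun i => convexComb_pos (hw i) (hw' i) ht.1 ht.2, hmem, k, l, ?_⟩⟩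
  have hne : w' k / w' l ≠ w k / w l := fun heq => (heq ▸ hkl).false
  rcases hne.lt_or_gt with hlt | hgt
  exacts [((hside k l t ht).1.2 hlt).ne, ((hside k l t ht).2.2 hgt).ne']

end Dominance

theorem efficiency_iff_internal_efficiency_general
    {n : ℕ} (A : Matrix (Fin n) (Fin n) ℝ)
    (w : Fin n → ℝ) (hw : ∀ i, 0 < w i) :
    (¬ ∃ w' : Fin n → ℝ, (∀ i, 0 < w' i) ∧
        (∀ i j, |A i j - w' i / w' j| ≤ |A i j - w i / w j|) ∧
        (∃ k l, |A k l - w' k / w' l| < |A k l - w k / w l|)) ↔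
    (¬ ∃ w' : Fin n → ℝ, (∀ i, 0 < w' i) ∧
        (∀ i j, (A i j ≤ w i / w j → A i j ≤ w' i / w' j ∧ w' i / w' j ≤ w i / w j) ∧
                (A i j ≥ w i / w j → A i j ≥ w' i / w' j ∧ w' i / w' j ≥ w i / w j)) ∧
        (∃ k l, (A k l ≤ w k / w l ∧ w' k / w' l < w k / w l) ∨
                (A k l ≥ w k / w l ∧ w' k / w' l > w k / w l))) :=
  not_congr ⟨fun ⟨_, h⟩ => exists_internallyDominates_of_dominates hw h,
    fun ⟨w', h⟩ => ⟨w', InternallyDominates.dominates h⟩⟩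

/-- For a pairwise comparison matrix `A` (n ≥ 3, positive, reciprocal)
and a positive weight vector `w`, `w` is efficient iff it is internally efficient. -/
theorem efficiency_iff_internal_efficiency
    {n : ℕ} (hn : 3 ≤ n) (A : Matrix (Fin n) (Fin n) ℝ)
    (hApos : ∀ i j, 0 < A i j) (hArec : ∀ i j, A i j = (A j i)⁻¹)
    (w : Fin n → ℝ) (hw : ∀ i, 0 < w i) :
    (¬ ∃ w' : Fin n → ℝ, (∀ i, 0 < w' i) ∧
        (∀ i j, |A i j - w' i / w' j| ≤ |A i j - w i / w j|) ∧
        (∃ k l, |A k l - w' k / w' l| < |A k l - w k / w l|)) ↔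
    (¬ ∃ w' : Fin n → ℝ, (∀ i, 0 < w' i) ∧
        (∀ i j, (A i j ≤ w i / w j → A i j ≤ w' i / w' j ∧ w' i / w' j ≤ w i / w j) ∧
                (A i j ≥ w i / w j → A i j ≥ w' i / w' j ∧ w' i / w' j ≥ w i / w j)) ∧
        (∃ k l, (A k l ≤ w k / w l ∧ w' k / w' l < w k / w l) ∨
                (A k l ≥ w k / w l ∧ w' k / w' l > w k / w l))) :=
  efficiency_iff_internal_efficiency_general A w hw
end

section
/- Let A be an n×n pairwise comparison matrix (n ≥ 3) and w a positive weight vector. Then w is efficient for A if and only if the directed graph G = (V, E) with V = {1,…,n} and arcs (i → j) for all i ≠ j with w_i/w_j ≥ a_ij is strongly connected, i.e., for every pair of distinct vertices i, j there is a directed path from i to j. -/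
/-!
Along an arc `p → q` the ratio `w p / w q` already overshoots `A p q`, so any `w'` approximating
`A` at least as well as `w` has `w' p / w' q ≤ w p / w q`, i.e. `w' / w` is nondecreasing along
arcs. In a strongly connected digraph `w' / w` is therefore constant and `w'` reproduces all
ratios of `w`.

Conversely, if `j` is not reachable from `i`, let `S` be the set of vertices reachable from `i`.
For `p ∈ S`, `q ∉ S` there is no arc, so `w p / w q < A p q`. Multiplying `w` on `S` by a factor
`m > 1` close enough to `1` moves each of these ratios strictly towards `A p q`, and by
reciprocity moves `w q / w p` towards `A q p`; all other ratios are unchanged.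
-/

open Filter Topology Relation

section AbsSub

variable {α : Type*} [AddCommGroup α] [LinearOrder α] [IsOrderedAddMonoid α] {a x y : α}

theorem abs_sub_lt_abs_sub_of_lt_of_le (hxy : x < y) (hya : y ≤ a) : |a - y| < |a - x| := by
  rw [abs_of_nonneg (sub_nonneg.2 hya), abs_of_nonneg (sub_nonneg.2 (hxy.le.trans hya))]
  exact sub_lt_sub_left hxy a

theorem abs_sub_le_abs_sub_of_le_of_le (hay : a ≤ y) (hyx : y ≤ x) : |a - y| ≤ |a - x| := by
  rw [abs_sub_comm a y, abs_sub_comm a x, abs_of_nonneg (sub_nonneg.2 hay),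
    abs_of_nonneg (sub_nonneg.2 (hay.trans hyx))]
  exact sub_le_sub_right hyx a

theorem le_of_abs_sub_le_abs_sub (h : |a - x| ≤ |a - y|) (hay : a ≤ y) : x ≤ y := by
  rw [abs_sub_comm a y, abs_of_nonneg (sub_nonneg.2 hay)] at h
  have := (le_abs_self (x - a)).trans ((abs_sub_comm x a).le.trans h)
  exact sub_le_sub_iff_right a |>.1 this

end AbsSub

theorem exists_one_lt_forall_mul_le {κ : Type*} [Finite κ] {s : Set κ} {c a : κ → ℝ}
    (h : ∀ k ∈ s, c k < a k) : ∃ m, 1 < m ∧ ∀ k ∈ s, m * c k ≤ a k := by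
  have hev : ∀ᶠ m in 𝓝[>] (1 : ℝ), ∀ k ∈ s, m * c k ≤ a k := by
    refine eventually_all.2 fun k => ?_
    by_cases hk : k ∈ s
    · have hc : Tendsto (fun m : ℝ => m * c k) (𝓝[>] 1) (𝓝 (c k)) :=
        ((continuous_id.mul continuous_const).tendsto' 1 (c k) (one_mul _)).mono_left
          nhdsWithin_le_nhds
      exact (hc.eventually_lt_const (h k hk)).mono fun m hm _ => hm.le
    · exact Eventually.of_forall fun m hk' => absurd hk' hk
  obtain ⟨m, hm, hm1⟩ := (hev.and self_mem_nhdsWithin).exists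
  exact ⟨m, hm1, hm⟩

namespace PairwiseComparison

variable {ι : Type*}

def Arc (A : Matrix ι ι ℝ) (w : ι → ℝ) (p q : ι) : Prop :=
  p ≠ q ∧ A p q ≤ w p / w q

def Dominates (A : Matrix ι ι ℝ) (w' w : ι → ℝ) : Prop :=
  (∀ i, 0 < w' i) ∧ (∀ i j, |A i j - w' i / w' j| ≤ |A i j - w i / w j|) ∧
    ∃ k l, |A k l - w' k / w' l| < |A k l - w k / w l|

section Efficient

variable {A : Matrix ι ι ℝ} {w w' : ι → ℝ} (hw : ∀ i, 0 < w i) (hw' : ∀ i, 0 < w' i)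
  (hle : ∀ i j, |A i j - w' i / w' j| ≤ |A i j - w i / w j|)
include hw hw' hle

theorem div_le_div_of_arc {p q : ι} (h : Arc A w p q) : w' p / w p ≤ w' q / w q := by
  have hratio : w' p / w' q ≤ w p / w q := le_of_abs_sub_le_abs_sub (hle p q) h.2
  rw [div_le_div_iff₀ (hw' q) (hw q)] at hratio
  rw [div_le_div_iff₀ (hw p) (hw q)]
  linarith

theorem div_le_div_of_transGen {p q : ι} (h : TransGen (Arc A w) p q) :
    w' p / w p ≤ w' q / w q := by
  induction h with
  | single h => exact div_le_div_of_arc hw hw' hle h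
  | tail _ h ih => exact ih.trans (div_le_div_of_arc hw hw' hle h)

theorem div_eq_div_of_stronglyConnected (hSC : ∀ i j, i ≠ j → TransGen (Arc A w) i j)
    (k l : ι) : w' k / w' l = w k / w l := by
  obtain rfl | hkl := eq_or_ne k l
  · rw [div_self (hw' k).ne', div_self (hw k).ne']
  have h := (div_le_div_of_transGen hw hw' hle (hSC k l hkl)).antisymm
    (div_le_div_of_transGen hw hw' hle (hSC l k hkl.symm))
  rw [div_eq_div_iff (hw k).ne' (hw l).ne'] at h
  rw [div_eq_div_iff (hw' l).ne' (hw l).ne']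
  linarith

end Efficient

theorem not_dominates_of_stronglyConnected {A : Matrix ι ι ℝ} {w w' : ι → ℝ}
    (hw : ∀ i, 0 < w i) (hSC : ∀ i j, i ≠ j → TransGen (Arc A w) i j) : ¬ Dominates A w' w := by
  rintro ⟨hw', hle, k, l, hkl⟩
  rw [div_eq_div_of_stronglyConnected hw hw' hle hSC k l] at hkl
  exact lt_irrefl _ hkl

section Dominated

variable {A : Matrix ι ι ℝ} {w : ι → ℝ} {S : Set ι} {m : ℝ}

theorem abs_sub_mul_div_lt_abs_sub_div (hw : ∀ i, 0 < w i) (hm : 1 < m) {p q : ι}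
    (hmA : m * (w p / w q) ≤ A p q) :
    |A p q - m * w p / w q| < |A p q - w p / w q| := by
  rw [mul_div_assoc]
  exact abs_sub_lt_abs_sub_of_lt_of_le (lt_mul_of_one_lt_left (div_pos (hw p) (hw q)) hm) hmA

theorem abs_sub_div_mul_le_abs_sub_div (hArec : ∀ i j, A i j = (A j i)⁻¹)
    (hw : ∀ i, 0 < w i) (hm : 1 < m) {p q : ι} (hmA : m * (w q / w p) ≤ A q p) :
    |A p q - w p / (m * w q)| ≤ |A p q - w p / w q| := by
  have hpos : 0 < m * (w q / w p) := mul_pos (zero_lt_one.trans hm) (div_pos (hw q) (hw p))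
  have hA : A p q ≤ w p / w q / m := by
    rw [hArec p q]
    calc (A q p)⁻¹ ≤ (m * (w q / w p))⁻¹ := inv_anti₀ hpos hmA
      _ = w p / w q / m := by rw [mul_inv, inv_div]; ring
  rw [div_mul_eq_div_div_swap]
  exact abs_sub_le_abs_sub_of_le_of_le hA (div_le_self (div_pos (hw p) (hw q)).le hm.le)

theorem exists_dominating_of_forall_lt [Finite ι] (hArec : ∀ i j, A i j = (A j i)⁻¹)
    (hw : ∀ i, 0 < w i) (hS : ∀ p ∈ S, ∀ q ∉ S, w p / w q < A p q) {i j : ι} (hi : i ∈ S)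
    (hj : j ∉ S) :
    ∃ w', Dominates A w' w := by
  classical
  obtain ⟨m, hm, hmA⟩ := exists_one_lt_forall_mul_le (s := {pq : ι × ι | pq.1 ∈ S ∧ pq.2 ∉ S})
    (c := fun pq => w pq.1 / w pq.2) (a := fun pq => A pq.1 pq.2)
    fun pq hpq => hS _ hpq.1 _ hpq.2
  have hm0 : 0 < m := zero_lt_one.trans hm
  refine ⟨fun p => if p ∈ S then m * w p else w p, fun p => ?_, fun p q => ?_, i, j, ?_⟩
  · dsimp only
    split_ifs
    exacts [mul_pos hm0 (hw p), hw p]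
  · by_cases hp : p ∈ S <;> by_cases hq : q ∈ S <;> simp only [hp, hq, if_true, if_false]
    · rw [mul_div_mul_left _ _ hm0.ne']
    · exact (abs_sub_mul_div_lt_abs_sub_div hw hm (hmA (p, q) ⟨hp, hq⟩)).le
    · exact abs_sub_div_mul_le_abs_sub_div hArec hw hm (hmA (q, p) ⟨hq, hp⟩)
    · exact le_rfl
  · simp only [hi, hj, if_true, if_false]
    exact abs_sub_mul_div_lt_abs_sub_div hw hm (hmA (i, j) ⟨hi, hj⟩)

theorem exists_dominating_of_not_transGen [Finite ι] (hArec : ∀ i j, A i j = (A j i)⁻¹)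
    (hw : ∀ i, 0 < w i) {i j : ι} (hij : i ≠ j) (hnot : ¬ TransGen (Arc A w) i j) :
    ∃ w', Dominates A w' w := by
  refine exists_dominating_of_forall_lt (S := {p | ReflTransGen (Arc A w) i p}) hArec hw
    (fun p hp q hq => lt_of_not_ge fun hle => hq (hp.tail ⟨?_, hle⟩)) ReflTransGen.refl
    fun hj => (reflTransGen_iff_eq_or_transGen.1 hj).elim (fun h => hij h.symm) hnot
  rintro rfl
  exact hq hp

end Dominated

end PairwiseComparison

open PairwiseComparison in
theorem efficiency_iff_strongly_connected_general
    {n : ℕ} (A : Matrix (Fin n) (Fin n) ℝ)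
    (hArec : ∀ i j, A i j = (A j i)⁻¹)
    (w : Fin n → ℝ) (hw : ∀ i, 0 < w i) :
    (¬ ∃ w' : Fin n → ℝ, (∀ i, 0 < w' i) ∧
        (∀ i j, |A i j - w' i / w' j| ≤ |A i j - w i / w j|) ∧
        (∃ k l, |A k l - w' k / w' l| < |A k l - w k / w l|)) ↔
    (∀ i j : Fin n, i ≠ j →
      Relation.TransGen (fun p q : Fin n => p ≠ q ∧ A p q ≤ w p / w q) i j) := by
  constructor
  · intro heff i j hij
    by_contra hnot
    exact heff (exists_dominating_of_not_transGen hArec hw hij hnot)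
  · rintro hSC ⟨w', hdom⟩
    exact not_dominates_of_stronglyConnected hw hSC hdom

/-- `w` is efficient iff the digraph with arcs i → j (i ≠ j, w i / w j ≥ A i j)
is strongly connected (a directed path between every pair of distinct vertices). -/
theorem efficiency_iff_strongly_connected
    {n : ℕ} (hn : 3 ≤ n) (A : Matrix (Fin n) (Fin n) ℝ)
    (hApos : ∀ i j, 0 < A i j) (hArec : ∀ i j, A i j = (A j i)⁻¹)
    (w : Fin n → ℝ) (hw : ∀ i, 0 < w i) :
    (¬ ∃ w' : Fin n → ℝ, (∀ i, 0 < w' i) ∧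
        (∀ i j, |A i j - w' i / w' j| ≤ |A i j - w i / w j|) ∧
        (∃ k l, |A k l - w' k / w' l| < |A k l - w k / w l|)) ↔
    (∀ i j : Fin n, i ≠ j →
      Relation.TransGen (fun p q : Fin n => p ≠ q ∧ A p q ≤ w p / w q) i j) :=
  efficiency_iff_strongly_connected_general A hArec w hw
end

section
/- Let A be an n×n pairwise comparison matrix (n ≥ 3) and w a positive weight vector. The set D(w) of positive vectors dominating w is a convex subset of ℝ^n, and if D(w) is nonempty then w does not belong to D(w) but w belongs to the closure of D(w) (hence w is a boundary point of D(w)). -/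
/-! The error `|a - k / l|` of a mediant `(k₁ + k₂) / (l₁ + l₂)` is at most the `l`-weighted
average of the errors of `k₁ / l₁` and `k₂ / l₂`. Since `x ↦ x i / x j` sends `s • x + t • y`
to the mediant of `s x i / s x j` and `t y i / t y j`, a positive combination of a dominating
vector and a vector that is at least as good as `w` is again dominating. This gives convexity,
and taking `s • x + w` with `s → 0⁺` shows that `w` lies in the closure. -/

open Filter Topology

section Mediant

variable {a c k₁ k₂ l₁ l₂ : ℝ}

lemma abs_sub_mediant_mul_le (hl₁ : 0 < l₁) (hl₂ : 0 < l₂) :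
    |a - (k₁ + k₂) / (l₁ + l₂)| * (l₁ + l₂) ≤ l₁ * |a - k₁ / l₁| + l₂ * |a - k₂ / l₂| := by
  have hl : 0 < l₁ + l₂ := add_pos hl₁ hl₂
  have key : (a - (k₁ + k₂) / (l₁ + l₂)) * (l₁ + l₂) =
      l₁ * (a - k₁ / l₁) + l₂ * (a - k₂ / l₂) := by
    field_simp
    ring
  calc |a - (k₁ + k₂) / (l₁ + l₂)| * (l₁ + l₂)
      = |l₁ * (a - k₁ / l₁) + l₂ * (a - k₂ / l₂)| := by rw [← key, abs_mul, abs_of_pos hl]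
    _ ≤ l₁ * |a - k₁ / l₁| + l₂ * |a - k₂ / l₂| := by
      refine (abs_add_le _ _).trans_eq ?_
      rw [abs_mul, abs_mul, abs_of_pos hl₁, abs_of_pos hl₂]

lemma abs_sub_mediant_le (hl₁ : 0 < l₁) (hl₂ : 0 < l₂) (h₁ : |a - k₁ / l₁| ≤ c)
    (h₂ : |a - k₂ / l₂| ≤ c) : |a - (k₁ + k₂) / (l₁ + l₂)| ≤ c := by
  refine le_of_mul_le_mul_right ((abs_sub_mediant_mul_le hl₁ hl₂).trans ?_) (add_pos hl₁ hl₂)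
  nlinarith

lemma abs_sub_mediant_lt (hl₁ : 0 < l₁) (hl₂ : 0 < l₂) (h₁ : |a - k₁ / l₁| < c)
    (h₂ : |a - k₂ / l₂| ≤ c) : |a - (k₁ + k₂) / (l₁ + l₂)| < c := by
  refine lt_of_mul_lt_mul_right ((abs_sub_mediant_mul_le hl₁ hl₂).trans_lt ?_) (add_pos hl₁ hl₂).le
  nlinarith

end Mediant

section DominatingSet

variable {ι : Type*} (A : Matrix ι ι ℝ) (w : ι → ℝ)

def dominatingSet : Set (ι → ℝ) :=
  {x | (∀ i, 0 < x i) ∧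
    (∀ i j, i ≠ j → |A i j - x i / x j| ≤ |A i j - w i / w j|) ∧
    (∃ k l, k ≠ l ∧ |A k l - x k / x l| < |A k l - w k / w l|)}

variable {A w}

lemma smul_add_smul_mem_dominatingSet {x y : ι → ℝ} (hx : x ∈ dominatingSet A w)
    (hy_pos : ∀ i, 0 < y i) (hy_le : ∀ i j, i ≠ j → |A i j - y i / y j| ≤ |A i j - w i / w j|)
    {s t : ℝ} (hs : 0 < s) (ht : 0 < t) : s • x + t • y ∈ dominatingSet A w := by
  obtain ⟨hx_pos, hx_le, k, l, hkl, hx_lt⟩ := hx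
  have hsx i : 0 < s * x i := mul_pos hs (hx_pos i)
  have hty i : 0 < t * y i := mul_pos ht (hy_pos i)
  have ratio_sx i j : s * x i / (s * x j) = x i / x j := mul_div_mul_left _ _ hs.ne'
  have ratio_ty i j : t * y i / (t * y j) = y i / y j := mul_div_mul_left _ _ ht.ne'
  simp only [dominatingSet, Set.mem_ofPred_eq, Pi.add_apply, Pi.smul_apply, smul_eq_mul]
  refine ⟨fun i => add_pos (hsx i) (hty i), fun i j hij => ?_, k, l, hkl, ?_⟩
  · exact abs_sub_mediant_le (hsx j) (hty j) (by rw [ratio_sx]; exact hx_le i j hij)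
      (by rw [ratio_ty]; exact hy_le i j hij)
  · exact abs_sub_mediant_lt (hsx l) (hty l) (by rwa [ratio_sx])
      (by rw [ratio_ty]; exact hy_le k l hkl)

lemma convex_dominatingSet : Convex ℝ (dominatingSet A w) := by
  refine convex_iff_openSegment_subset.2 fun x hx y hy => ?_
  rintro _ ⟨s, t, hs, ht, -, rfl⟩
  exact smul_add_smul_mem_dominatingSet hx hy.1 hy.2.1 hs ht

lemma self_notMem_dominatingSet : w ∉ dominatingSet A w :=
  fun ⟨_, _, _, _, _, h⟩ => lt_irrefl _ h

lemma self_mem_closure_dominatingSet (hw : ∀ i, 0 < w i) (hne : (dominatingSet A w).Nonempty) :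
    w ∈ closure (dominatingSet A w) := by
  obtain ⟨x, hx⟩ := hne
  have hlim : Tendsto (fun s : ℝ => s • x + w) (𝓝[>] 0) (𝓝 w) := by
    have hcont : Continuous (fun s : ℝ => s • x + w) := by fun_prop
    simpa using (hcont.tendsto 0).mono_left nhdsWithin_le_nhds
  refine mem_closure_of_tendsto hlim (eventually_nhdsWithin_of_forall fun s hs => ?_)
  simpa using smul_add_smul_mem_dominatingSet hx hw (fun _ _ _ => le_rfl) hs one_pos

end DominatingSet

theorem dominating_set_convex_boundary_general
    {n : ℕ} (A : Matrix (Fin n) (Fin n) ℝ)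
    (w : Fin n → ℝ) (hw : ∀ i, 0 < w i) :
    let Dw : Set (Fin n → ℝ) :=
      {x | (∀ i, 0 < x i) ∧
        (∀ i j, i ≠ j → |A i j - x i / x j| ≤ |A i j - w i / w j|) ∧
        (∃ k l, k ≠ l ∧ |A k l - x k / x l| < |A k l - w k / w l|)}
    Convex ℝ Dw ∧ (Dw.Nonempty → w ∉ Dw ∧ w ∈ closure Dw) :=
  ⟨convex_dominatingSet, fun hne =>
    ⟨self_notMem_dominatingSet, self_mem_closure_dominatingSet hw hne⟩⟩

/-- The dominating set `D(w)` is convex, and if nonempty, then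
`w ∉ D(w)` but `w ∈ closure (D(w))`. -/
theorem dominating_set_convex_boundary
    {n : ℕ} (hn : 3 ≤ n) (A : Matrix (Fin n) (Fin n) ℝ)
    (hApos : ∀ i j, 0 < A i j) (hArec : ∀ i j, A i j = (A j i)⁻¹)
    (w : Fin n → ℝ) (hw : ∀ i, 0 < w i) :
    let Dw : Set (Fin n → ℝ) :=
      {x | (∀ i, 0 < x i) ∧
        (∀ i j, i ≠ j → |A i j - x i / x j| ≤ |A i j - w i / w j|) ∧
        (∃ k l, k ≠ l ∧ |A k l - x k / x l| < |A k l - w k / w l|)}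
    Convex ℝ Dw ∧ (Dw.Nonempty → w ∉ Dw ∧ w ∈ closure Dw) :=
  dominating_set_convex_boundary_general A w hw
end

section
/- Let A be an n×n pairwise comparison matrix (n ≥ 3) and w a positive weight vector. The set SD(w) of positive vectors strongly dominating w is a convex subset of ℝ^n (indeed an intersection of finitely many open half-spaces with the open positive orthant, hence open), and if SD(w) is nonempty then w does not belong to SD(w) but w belongs to the closure of SD(w). -/
/-!
After multiplying through by `x j > 0`, each condition defining `SD(w)` says that the convex,
continuous function `x ↦ |A i j * x j - x i| - |A i j - w i / w j| * x j` is negative; together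
with positivity of the coordinates, `SD(w)` is the set where finitely many convex continuous
functions are negative, hence convex and open. At `w` itself the pair constraints vanish, so
`w ∉ SD(w)`, while all constraints are `≤ 0` at `w`. By convexity every constraint is then
negative on the open segment from `w` to any `y ∈ SD(w)`, and `w` is a limit of that segment.
-/

open Set

lemma abs_sub_div_eq {a b d : ℝ} (hd : 0 < d) : |a - b / d| = |a * d - b| / d := by
  rw [← abs_of_pos hd, ← abs_div, abs_of_pos hd, sub_div, mul_div_cancel_right₀ _ hd.ne']

lemma convexOn_abs_sub {E : Type*} [AddCommGroup E] [Module ℝ E] (L M : E →ₗ[ℝ] ℝ) :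
    ConvexOn ℝ univ (fun x => |L x| - M x) := by
  have := ((convexOn_norm convex_univ).comp_linearMap L).sub (M.concaveOn convex_univ)
  rw [preimage_univ] at this
  exact this

lemma isOpen_setOf_forall_neg {E κ : Type*} [TopologicalSpace E] [Finite κ] {f : κ → E → ℝ}
    (hf : ∀ k, Continuous (f k)) : IsOpen {x | ∀ k, f k x < 0} := by
  simpa only [ofPred_forall] using
    isOpen_iInter_of_finite fun k => isOpen_lt (hf k) continuous_const

section ConvexFamily

variable {E κ : Type*} [AddCommGroup E] [Module ℝ E] {f : κ → E → ℝ}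

lemma convex_setOf_forall_neg (hf : ∀ k, ConvexOn ℝ univ (f k)) :
    Convex ℝ {x | ∀ k, f k x < 0} := by
  simpa only [ofPred_forall] using
    convex_iInter fun k => by simpa only [mem_univ, true_and] using (hf k).convex_lt 0

lemma openSegment_subset_setOf_forall_neg (hf : ∀ k, ConvexOn ℝ univ (f k)) {w y : E}
    (hw : ∀ k, f k w ≤ 0) (hy : ∀ k, f k y < 0) :
    openSegment ℝ w y ⊆ {x | ∀ k, f k x < 0} := by
  rintro _ ⟨a, b, ha, hb, hab, rfl⟩ k
  have hwa : a * f k w ≤ 0 := mul_nonpos_of_nonneg_of_nonpos ha.le (hw k)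
  have hyb : b * f k y < 0 := mul_neg_of_pos_of_neg hb (hy k)
  calc f k (a • w + b • y) ≤ a • f k w + b • f k y := (hf k).2 trivial trivial ha.le hb.le hab
    _ < 0 := by simp only [smul_eq_mul]; linarith

end ConvexFamily

lemma left_mem_closure_of_openSegment_subset {E : Type*} [AddCommGroup E] [Module ℝ E]
    [TopologicalSpace E] [IsTopologicalAddGroup E] [ContinuousSMul ℝ E] {s : Set E} {w y : E}
    (h : openSegment ℝ w y ⊆ s) : w ∈ closure s :=
  closure_mono h (segment_subset_closure_openSegment (left_mem_segment ℝ w y))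

namespace PairwiseComparison

variable {ι : Type*} (A : Matrix ι ι ℝ) (w : ι → ℝ)

def strongDominatingSet : Set (ι → ℝ) :=
  {x | (∀ i, 0 < x i) ∧ ∀ i j, i ≠ j → |A i j - x i / x j| < |A i j - w i / w j|}

noncomputable def constraint : ι ⊕ {p : ι × ι // p.1 ≠ p.2} → (ι → ℝ) → ℝ
  | .inl i, x => -x i
  | .inr ⟨(i, j), _⟩, x => |A i j * x j - x i| - |A i j - w i / w j| * x j

lemma forall_constraint_neg_iff (x : ι → ℝ) :
    (∀ k, constraint A w k x < 0) ↔ x ∈ strongDominatingSet A w := by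
  simp only [Sum.forall, Subtype.forall, Prod.forall, constraint, neg_lt_zero, sub_neg]
  refine and_congr_right fun hx => forall₂_congr fun i j => imp_congr_right fun _ => ?_
  rw [abs_sub_div_eq (hx j), div_lt_iff₀ (hx j)]

lemma strongDominatingSet_eq : strongDominatingSet A w = {x | ∀ k, constraint A w k x < 0} :=
  ext fun x => (forall_constraint_neg_iff A w x).symm

lemma convexOn_constraint (k : ι ⊕ {p : ι × ι // p.1 ≠ p.2}) :
    ConvexOn ℝ univ (constraint A w k) := by
  let π (i : ι) : (ι → ℝ) →ₗ[ℝ] ℝ := LinearMap.proj i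
  rcases k with i | ⟨⟨i, j⟩, -⟩
  · exact (-π i).convexOn convex_univ
  · exact convexOn_abs_sub (A i j • π j - π i) (|A i j - w i / w j| • π j)

lemma continuous_constraint (k : ι ⊕ {p : ι × ι // p.1 ≠ p.2}) :
    Continuous (constraint A w k) := by
  rcases k with i | ⟨⟨i, j⟩, -⟩ <;> unfold constraint <;> fun_prop

variable {w}

lemma constraint_self_nonpos (hw : ∀ i, 0 < w i) (k : ι ⊕ {p : ι × ι // p.1 ≠ p.2}) :
    constraint A w k w ≤ 0 := by
  rcases k with i | ⟨⟨i, j⟩, -⟩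
  · exact neg_nonpos.mpr (hw i).le
  · simp only [constraint, abs_sub_div_eq (hw j), div_mul_cancel₀ _ (hw j).ne', sub_self, le_refl]

variable (w)

lemma convex_strongDominatingSet : Convex ℝ (strongDominatingSet A w) := by
  rw [strongDominatingSet_eq]
  exact convex_setOf_forall_neg (convexOn_constraint A w)

lemma isOpen_strongDominatingSet [Finite ι] : IsOpen (strongDominatingSet A w) := by
  rw [strongDominatingSet_eq]
  exact isOpen_setOf_forall_neg (continuous_constraint A w)

lemma self_notMem_strongDominatingSet [Nontrivial ι] : w ∉ strongDominatingSet A w := by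
  obtain ⟨i, j, hij⟩ := exists_pair_ne ι
  exact fun hw => lt_irrefl _ (hw.2 i j hij)

variable {w}

lemma mem_closure_strongDominatingSet (hw : ∀ i, 0 < w i)
    (hne : (strongDominatingSet A w).Nonempty) : w ∈ closure (strongDominatingSet A w) := by
  obtain ⟨y, hy⟩ := hne
  rw [strongDominatingSet_eq] at hy ⊢
  exact left_mem_closure_of_openSegment_subset <|
    openSegment_subset_setOf_forall_neg (convexOn_constraint A w) (constraint_self_nonpos A hw) hy

end PairwiseComparison

theorem strongly_dominating_set_convex_open_boundary_general
    {n : ℕ} (hn : 3 ≤ n) (A : Matrix (Fin n) (Fin n) ℝ)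
    (w : Fin n → ℝ) (hw : ∀ i, 0 < w i) :
    let SDw : Set (Fin n → ℝ) :=
      {x | (∀ i, 0 < x i) ∧
        (∀ i j, i ≠ j → |A i j - x i / x j| < |A i j - w i / w j|)}
    Convex ℝ SDw ∧ IsOpen SDw ∧ (SDw.Nonempty → w ∉ SDw ∧ w ∈ closure SDw) := by
  have : Nontrivial (Fin n) := Fin.nontrivial_iff_two_le.mpr (by omega)
  exact ⟨PairwiseComparison.convex_strongDominatingSet A w,
    PairwiseComparison.isOpen_strongDominatingSet A w,
    fun hne => ⟨PairwiseComparison.self_notMem_strongDominatingSet A w,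
      PairwiseComparison.mem_closure_strongDominatingSet A hw hne⟩⟩

/-- The strongly dominating set `SD(w)` is convex and open, and if
nonempty, then `w ∉ SD(w)` but `w ∈ closure (SD(w))`. -/
theorem strongly_dominating_set_convex_open_boundary
    {n : ℕ} (hn : 3 ≤ n) (A : Matrix (Fin n) (Fin n) ℝ)
    (hApos : ∀ i j, 0 < A i j) (hArec : ∀ i j, A i j = (A j i)⁻¹)
    (w : Fin n → ℝ) (hw : ∀ i, 0 < w i) :
    let SDw : Set (Fin n → ℝ) :=
      {x | (∀ i, 0 < x i) ∧
        (∀ i j, i ≠ j → |A i j - x i / x j| < |A i j - w i / w j|)}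
    Convex ℝ SDw ∧ IsOpen SDw ∧ (SDw.Nonempty → w ∉ SDw ∧ w ∈ closure SDw) :=
  strongly_dominating_set_convex_open_boundary_general hn A w hw
end

section
/- Let A be an n×n pairwise comparison matrix (n ≥ 3) and w a positive weight vector. If SD(w) is nonempty, then SD(w) equals the interior of D(w), and the closure of SD(w) equals the closure of D(w). -/
/-!
For `x_j > 0` the bound `|a_ij - x_i / x_j| ≤ c_ij` is equivalent to the linear bound
`|a_ij x_j - x_i| ≤ c_ij x_j`. Hence if `x` satisfies all the weak bounds defining `D(w)` and `y`
all the strict ones defining `SD(w)`, the whole open segment between them lies in `SD(w)`.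
Since `SD(w)` is open and sits between the set `W` of weak solutions and `D(w) ⊆ W`, this
segment property gives `interior W ⊆ SD(w)` and `W ⊆ closure SD(w)`.
-/

open Set Filter Topology

section Segment

variable {E : Type*} [AddCommGroup E] [Module ℝ E] [TopologicalSpace E] [ContinuousAdd E]
  [ContinuousSMul ℝ E]

-- `x ∈ interior W` lies strictly between `y` and `x + t • (x - y) ∈ W` for small `t > 0`.
lemma interior_subset_of_forall_openSegment_subset {S W : Set E}
    (hseg : ∀ x ∈ W, ∀ y ∈ S, openSegment ℝ x y ⊆ S) (hS : S.Nonempty) : interior W ⊆ S := by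
  obtain ⟨y, hy⟩ := hS
  intro x hx
  have hline : Continuous fun t : ℝ => x + t • (x - y) := by fun_prop
  have hnear : ∀ᶠ t in 𝓝 (0 : ℝ), x + t • (x - y) ∈ W := by
    refine hline.continuousAt.eventually_mem ?_
    simpa using mem_interior_iff_mem_nhds.1 hx
  obtain ⟨t, ht, htW⟩ := hnear.exists_gt
  refine hseg _ htW y hy ⟨1 / (1 + t), t / (1 + t), by positivity, by positivity, ?_, ?_⟩
  · field_simp
  · match_scalars <;> field_simp
    ring

lemma subset_closure_of_forall_openSegment_subset {S W : Set E}
    (hseg : ∀ x ∈ W, ∀ y ∈ S, openSegment ℝ x y ⊆ S) (hS : S.Nonempty) : W ⊆ closure S := by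
  obtain ⟨y, hy⟩ := hS
  intro x hx
  exact closure_mono (hseg x hx y hy) (segment_subset_closure_openSegment (left_mem_segment ℝ x y))

end Segment

lemma abs_sub_div_lt_iff {a c p q : ℝ} (hq : 0 < q) : |a - p / q| < c ↔ |a * q - p| < c * q := by
  rw [show a - p / q = (a * q - p) / q by field_simp, abs_div, abs_of_pos hq, div_lt_iff₀ hq]

lemma abs_sub_div_le_iff {a c p q : ℝ} (hq : 0 < q) : |a - p / q| ≤ c ↔ |a * q - p| ≤ c * q := by
  rw [show a - p / q = (a * q - p) / q by field_simp, abs_div, abs_of_pos hq, div_le_iff₀ hq]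

lemma abs_sub_mediant_lt_s6 {a c ui uj vi vj s t : ℝ} (huj : 0 < uj) (hvj : 0 < vj)
    (hs : 0 ≤ s) (ht : 0 < t) (hu : |a - ui / uj| ≤ c) (hv : |a - vi / vj| < c) :
    |a - (s * ui + t * vi) / (s * uj + t * vj)| < c := by
  rw [abs_sub_div_le_iff huj] at hu
  rw [abs_sub_div_lt_iff hvj] at hv
  rw [abs_sub_div_lt_iff (by positivity)]
  calc |a * (s * uj + t * vj) - (s * ui + t * vi)|
      = |s * (a * uj - ui) + t * (a * vj - vi)| := by congr 1; ring
    _ ≤ s * |a * uj - ui| + t * |a * vj - vi| := by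
      grw [abs_add_le, abs_mul, abs_mul, abs_of_nonneg hs, abs_of_pos ht]
    _ < c * (s * uj + t * vj) := by nlinarith [mul_le_mul_of_nonneg_left hu hs]

namespace RatioBound

variable {ι : Type*} (a c : ι → ι → ℝ)

def weak : Set (ι → ℝ) :=
  {x | (∀ i, 0 < x i) ∧ ∀ i j, i ≠ j → |a i j - x i / x j| ≤ c i j}

def strict : Set (ι → ℝ) :=
  {x | (∀ i, 0 < x i) ∧ ∀ i j, i ≠ j → |a i j - x i / x j| < c i j}

variable {a c}

lemma openSegment_subset_strict {x y : ι → ℝ} (hx : x ∈ weak a c) (hy : y ∈ strict a c) :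
    openSegment ℝ x y ⊆ strict a c := by
  rintro _ ⟨s, t, hs, ht, -, rfl⟩
  refine ⟨fun i => ?_, fun i j hij => ?_⟩
  · have := hx.1 i; have := hy.1 i
    simp only [Pi.add_apply, Pi.smul_apply, smul_eq_mul]
    positivity
  · exact abs_sub_mediant_lt_s6 (hx.1 j) (hy.1 j) hs.le ht (hx.2 i j hij) (hy.2 i j hij)

lemma isOpen_strict [Finite ι] : IsOpen (strict a c) := by
  refine isOpen_iff_mem_nhds.2 fun x ⟨hx0, hx⟩ => ?_
  refine (eventually_all.2 fun i => ?_).and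
    (eventually_all.2 fun i => eventually_all.2 fun j => ?_)
  · exact continuousAt_const.eventually_lt (continuous_apply i).continuousAt (hx0 i)
  · by_cases hij : i = j
    · simp [hij]
    have hcont : ContinuousAt (fun y : ι → ℝ => |a i j - y i / y j|) x :=
      (continuousAt_const.sub ((continuous_apply i).continuousAt.div
        (continuous_apply j).continuousAt (hx0 j).ne')).abs
    filter_upwards [hcont.eventually_lt continuousAt_const (hx i j hij)] with y hy _ using hy

end RatioBound

theorem strongly_dominating_interior_closure_general
    {n : ℕ} (hn : 3 ≤ n) (A : Matrix (Fin n) (Fin n) ℝ)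
    (w : Fin n → ℝ) :
    let Dw : Set (Fin n → ℝ) :=
      {x | (∀ i, 0 < x i) ∧
        (∀ i j, i ≠ j → |A i j - x i / x j| ≤ |A i j - w i / w j|) ∧
        (∃ k l, k ≠ l ∧ |A k l - x k / x l| < |A k l - w k / w l|)}
    let SDw : Set (Fin n → ℝ) :=
      {x | (∀ i, 0 < x i) ∧
        (∀ i j, i ≠ j → |A i j - x i / x j| < |A i j - w i / w j|)}
    SDw.Nonempty → SDw = interior Dw ∧ closure SDw = closure Dw := by
  intro Dw SDw hne
  let c : Fin n → Fin n → ℝ := fun i j => |A i j - w i / w j|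
  have hSD : SDw = RatioBound.strict A c := rfl
  have hDweak : Dw ⊆ RatioBound.weak A c := fun x hx => ⟨hx.1, hx.2.1⟩
  have hSDD : SDw ⊆ Dw := by
    have : Nontrivial (Fin n) := Fin.nontrivial_iff_two_le.2 (by omega)
    obtain ⟨k, l, hkl⟩ := exists_pair_ne (Fin n)
    exact fun x hx => ⟨hx.1, fun i j hij => (hx.2 i j hij).le, k, l, hkl, hx.2 k l hkl⟩
  have hseg : ∀ x ∈ RatioBound.weak A c, ∀ y ∈ SDw, openSegment ℝ x y ⊆ SDw :=
    fun _ hx _ hy => RatioBound.openSegment_subset_strict hx hy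
  refine ⟨(interior_maximal hSDD (hSD ▸ RatioBound.isOpen_strict)).antisymm
    ((interior_mono hDweak).trans (interior_subset_of_forall_openSegment_subset hseg hne)), ?_⟩
  exact (closure_mono hSDD).antisymm <| closure_minimal
    (hDweak.trans (subset_closure_of_forall_openSegment_subset hseg hne)) isClosed_closure

/-- If `SD(w)` is nonempty, then `SD(w) = interior (D(w))` and
`closure (SD(w)) = closure (D(w))`. -/
theorem strongly_dominating_interior_closure
    {n : ℕ} (hn : 3 ≤ n) (A : Matrix (Fin n) (Fin n) ℝ)
    (hApos : ∀ i j, 0 < A i j) (hArec : ∀ i j, A i j = (A j i)⁻¹)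
    (w : Fin n → ℝ) (hw : ∀ i, 0 < w i) :
    let Dw : Set (Fin n → ℝ) :=
      {x | (∀ i, 0 < x i) ∧
        (∀ i j, i ≠ j → |A i j - x i / x j| ≤ |A i j - w i / w j|) ∧
        (∃ k l, k ≠ l ∧ |A k l - x k / x l| < |A k l - w k / w l|)}
    let SDw : Set (Fin n → ℝ) :=
      {x | (∀ i, 0 < x i) ∧
        (∀ i j, i ≠ j → |A i j - x i / x j| < |A i j - w i / w j|)}
    SDw.Nonempty → SDw = interior Dw ∧ closure SDw = closure Dw :=
  strongly_dominating_interior_closure_general hn A w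
end

section
/- Let A be an n×n pairwise comparison matrix (n ≥ 3) and w a positive weight vector. Then w is weakly efficient for A if and only if w is locally weakly efficient, i.e., if and only if there exists an open neighborhood U of w in ℝ^n such that no positive vector w′ ∈ U satisfies |a_ij − w′_i/w′_j| < |a_ij − w_i/w_j| for all i ≠ j. -/
/-!
If `w'` strongly dominates `w`, so does every point `w ^ (1 - t) * w' ^ t` (coordinatewise) of the
geometric path from `w` to `w'`, for `0 < t < 1`: each ratio along this path is the weighted
geometric mean `(wᵢ/wⱼ) ^ (1 - t) * (w'ᵢ/w'ⱼ) ^ t`, which lies strictly between `wᵢ/wⱼ` and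
`w'ᵢ/w'ⱼ`, hence strictly closer to `aᵢⱼ` than `wᵢ/wⱼ`. As `t → 0` the path enters every
neighbourhood of `w`, so a global dominator yields dominators arbitrarily close to `w`.
-/

open Set Filter Topology

lemma abs_sub_lt_of_mem_uIoo {a r r' x : ℝ} (h : |a - r'| < |a - r|) (hx : x ∈ uIoo r r') :
    |a - x| < |a - r| := by
  simp only [uIoo, mem_Ioo, inf_lt_iff, lt_sup_iff] at hx
  rcases hx with ⟨h1 | h1, h2 | h2⟩ <;>
    rcases abs_cases (a - r') with ⟨e1, s1⟩ | ⟨e1, s1⟩ <;>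
    rcases abs_cases (a - r) with ⟨e2, s2⟩ | ⟨e2, s2⟩ <;>
    rcases abs_cases (a - x) with ⟨e3, s3⟩ | ⟨e3, s3⟩ <;> linarith

lemma Real.rpow_mul_rpow_mem_uIoo {r r' t : ℝ} (hr : 0 < r) (hr' : 0 < r') (hne : r ≠ r')
    (ht : t ∈ Ioo 0 1) : r ^ (1 - t) * r' ^ t ∈ uIoo r r' := by
  wlog hlt : r < r' generalizing r r' t
  · have key := this hr' hr hne.symm ⟨sub_pos.2 ht.2, sub_lt_self 1 ht.1⟩
      (lt_of_le_of_ne (not_lt.1 hlt) hne.symm)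
    rwa [sub_sub_cancel, mul_comm, uIoo_comm] at key
  rw [uIoo_of_lt hlt]
  have h1t : 0 < 1 - t := sub_pos.2 ht.2
  constructor
  · calc r = r ^ (1 - t) * r ^ t := by rw [← Real.rpow_add hr, sub_add_cancel, Real.rpow_one]
      _ < r ^ (1 - t) * r' ^ t := by gcongr; exact ht.1
  · calc r ^ (1 - t) * r' ^ t < r' ^ (1 - t) * r' ^ t := by gcongr
      _ = r' := by rw [← Real.rpow_add hr', sub_add_cancel, Real.rpow_one]

section PairwiseComparison

variable {ι : Type*}

def StronglyDominates (A : Matrix ι ι ℝ) (w w' : ι → ℝ) : Prop :=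
  ∀ i j, i ≠ j → |A i j - w' i / w' j| < |A i j - w i / w j|

noncomputable def geomPath (w w' : ι → ℝ) (t : ℝ) : ι → ℝ :=
  fun i => w i ^ (1 - t) * w' i ^ t

variable {w w' : ι → ℝ}

@[simp]
lemma geomPath_zero : geomPath w w' 0 = w := by
  funext i
  simp [geomPath]

lemma geomPath_pos (hw : ∀ i, 0 < w i) (hw' : ∀ i, 0 < w' i) (t : ℝ) (i : ι) :
    0 < geomPath w w' t i :=
  mul_pos (Real.rpow_pos_of_pos (hw i) _) (Real.rpow_pos_of_pos (hw' i) _)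

lemma continuous_geomPath (hw : ∀ i, 0 < w i) (hw' : ∀ i, 0 < w' i) :
    Continuous (geomPath w w') := by
  refine continuous_pi fun i => ?_
  exact (continuous_const.rpow (continuous_const.sub continuous_id) fun _ => Or.inl (hw i).ne').mul
    (continuous_const.rpow continuous_id fun _ => Or.inl (hw' i).ne')

lemma geomPath_div (hw : ∀ i, 0 < w i) (hw' : ∀ i, 0 < w' i) (t : ℝ) (i j : ι) :
    geomPath w w' t i / geomPath w w' t j = (w i / w j) ^ (1 - t) * (w' i / w' j) ^ t := by
  simp only [geomPath, Real.div_rpow (hw i).le (hw j).le, Real.div_rpow (hw' i).le (hw' j).le]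
  ring

lemma StronglyDominates.to_geomPath {A : Matrix ι ι ℝ} (hdom : StronglyDominates A w w')
    (hw : ∀ i, 0 < w i) (hw' : ∀ i, 0 < w' i) {t : ℝ} (ht : t ∈ Ioo 0 1) :
    StronglyDominates A w (geomPath w w' t) := by
  intro i j hij
  have hne : w i / w j ≠ w' i / w' j := fun h => (hdom i j hij).ne (by rw [h])
  rw [geomPath_div hw hw']
  exact abs_sub_lt_of_mem_uIoo (hdom i j hij) <|
    Real.rpow_mul_rpow_mem_uIoo (div_pos (hw i) (hw j)) (div_pos (hw' i) (hw' j)) hne ht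

lemma StronglyDominates.exists_mem_nhds {A : Matrix ι ι ℝ} (hdom : StronglyDominates A w w')
    (hw : ∀ i, 0 < w i) (hw' : ∀ i, 0 < w' i) {U : Set (ι → ℝ)} (hU : U ∈ 𝓝 w) :
    ∃ v ∈ U, (∀ i, 0 < v i) ∧ StronglyDominates A w v := by
  have hpath : Tendsto (geomPath w w') (𝓝[>] 0) (𝓝 w) := by
    simpa using ((continuous_geomPath hw hw').tendsto 0).mono_left nhdsWithin_le_nhds
  obtain ⟨t, htU, ht⟩ :=
    ((hpath.eventually_mem hU).and (Ioo_mem_nhdsGT zero_lt_one)).exists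
  exact ⟨_, htU, geomPath_pos hw hw' t, hdom.to_geomPath hw hw' ht⟩

end PairwiseComparison

theorem weak_efficiency_iff_local_weak_efficiency_general
    {n : ℕ} (A : Matrix (Fin n) (Fin n) ℝ)
    (w : Fin n → ℝ) (hw : ∀ i, 0 < w i) :
    (¬ ∃ w' : Fin n → ℝ, (∀ i, 0 < w' i) ∧
        (∀ i j, i ≠ j → |A i j - w' i / w' j| < |A i j - w i / w j|)) ↔
    (∃ U : Set (Fin n → ℝ), IsOpen U ∧ w ∈ U ∧
      ¬ ∃ w' : Fin n → ℝ, w' ∈ U ∧ (∀ i, 0 < w' i) ∧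
        (∀ i j, i ≠ j → |A i j - w' i / w' j| < |A i j - w i / w j|)) := by
  constructor
  · intro hglobal
    exact ⟨univ, isOpen_univ, mem_univ w, fun ⟨w', _, hpos, hdom⟩ => hglobal ⟨w', hpos, hdom⟩⟩
  · rintro ⟨U, hU, hwU, hlocal⟩ ⟨w', hw', hdom⟩
    exact hlocal (StronglyDominates.exists_mem_nhds hdom hw hw' (hU.mem_nhds hwU))

/-- `w` is weakly efficient iff it is locally weakly efficient. -/
theorem weak_efficiency_iff_local_weak_efficiency
    {n : ℕ} (hn : 3 ≤ n) (A : Matrix (Fin n) (Fin n) ℝ)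
    (hApos : ∀ i j, 0 < A i j) (hArec : ∀ i j, A i j = (A j i)⁻¹)
    (w : Fin n → ℝ) (hw : ∀ i, 0 < w i) :
    (¬ ∃ w' : Fin n → ℝ, (∀ i, 0 < w' i) ∧
        (∀ i j, i ≠ j → |A i j - w' i / w' j| < |A i j - w i / w j|)) ↔
    (∃ U : Set (Fin n → ℝ), IsOpen U ∧ w ∈ U ∧
      ¬ ∃ w' : Fin n → ℝ, w' ∈ U ∧ (∀ i, 0 < w' i) ∧
        (∀ i j, i ≠ j → |A i j - w' i / w' j| < |A i j - w i / w j|)) :=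
  weak_efficiency_iff_local_weak_efficiency_general A w hw
end

section
/- Let A be an n×n pairwise comparison matrix (n ≥ 3) and w a positive weight vector. Then w is weakly efficient for A if and only if w is internally weakly efficient, i.e., if and only if there exists no positive weight vector w′ such that for all i ≠ j: a_ij ≤ w_i/w_j implies a_ij ≤ w′_i/w′_j < w_i/w_j, and a_ij ≥ w_i/w_j implies a_ij ≥ w′_i/w′_j > w_i/w_j. -/
/-!
If `w'` improves every entry, move `w` a little towards `w'` along the segment
`(1 - t) • w + t • w'`. Each ratio `v i / v j` then leaves `w i / w j` by a positive multiple of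
the displacement `w' i / w' j - w i / w j`, which points towards `A i j` because `w'` is closer to
it; for `t` small the ratio does not overshoot `A i j`. Finitely many entries make "small `t`" a
single choice, via the filter `𝓝[>] 0`.
-/

open Filter Topology Set

/-- `r'` is obtained from `r` by a strict step towards `a` that does not pass `a`. -/
def IsStepToward (a r r' : ℝ) : Prop :=
  (a ≤ r → a ≤ r' ∧ r' < r) ∧ (a ≥ r → a ≥ r' ∧ r' > r)

theorem IsStepToward.abs_sub_lt {a r r' : ℝ} (h : IsStepToward a r r') :
    |a - r'| < |a - r| := by
  rcases le_total a r with har | har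
  · obtain ⟨h₁, h₂⟩ := h.1 har
    rw [abs_of_nonpos (by linarith), abs_of_nonpos (by linarith)]
    linarith
  · obtain ⟨h₁, h₂⟩ := h.2 har
    rw [abs_of_nonneg (by linarith), abs_of_nonneg (by linarith)]
    linarith

theorem isStepToward_of_abs_sub_lt {a r r' s c : ℝ} (h : |a - r'| < |a - r|) (hc : 0 < c)
    (hs : s - r = c * (r' - r)) (hsr : |s - r| < |a - r|) : IsStepToward a r s := by
  rcases lt_trichotomy a r with har | rfl | har
  · have hr' : r' < r := by
      have := neg_abs_le (a - r')
      rw [abs_of_neg (sub_neg.2 har)] at h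
      linarith
    have hsr' : s < r := by nlinarith
    rw [abs_of_neg (sub_neg.2 har), abs_of_neg (sub_neg.2 hsr')] at hsr
    exact ⟨fun _ => ⟨by linarith, hsr'⟩, fun h' => absurd h' (not_le.2 har)⟩
  · exact absurd h (by simp)
  · have hr' : r < r' := by
      have := le_abs_self (a - r')
      rw [abs_of_pos (sub_pos.2 har)] at h
      linarith
    have hsr' : r < s := by nlinarith
    rw [abs_of_pos (sub_pos.2 har), abs_of_pos (sub_pos.2 hsr')] at hsr
    exact ⟨fun h' => absurd h' (not_le.2 har), fun _ => ⟨by linarith, hsr'⟩⟩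

theorem lineMap_div_lineMap_sub_div {x y x' y' t : ℝ} (hy : y ≠ 0) (hy' : y' ≠ 0)
    (hv : (1 - t) * y + t * y' ≠ 0) :
    ((1 - t) * x + t * x') / ((1 - t) * y + t * y') - x / y =
      t * y' / ((1 - t) * y + t * y') * (x' / y' - x / y) := by
  field_simp
  ring

theorem eventually_abs_lineMap_div_lineMap_sub_div_lt {x y x' y' δ : ℝ} (hy : y ≠ 0)
    (hδ : 0 < δ) :
    ∀ᶠ t in 𝓝 (0 : ℝ), |((1 - t) * x + t * x') / ((1 - t) * y + t * y') - x / y| < δ := by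
  have hcont : ContinuousAt (fun t : ℝ => ((1 - t) * x + t * x') / ((1 - t) * y + t * y')) 0 :=
    by fun_prop (disch := simpa)
  have hlim := hcont.tendsto
  simp only [sub_zero, one_mul, zero_mul, add_zero] at hlim
  simpa only [Real.dist_eq] using Metric.tendsto_nhds.1 hlim δ hδ

theorem eventually_isStepToward_lineMap_div {a x y x' y' : ℝ} (hy : 0 < y) (hy' : 0 < y')
    (h : |a - x' / y'| < |a - x / y|) :
    ∀ᶠ t in 𝓝[>] (0 : ℝ),
      IsStepToward a (x / y) (((1 - t) * x + t * x') / ((1 - t) * y + t * y')) := by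
  have hδ : 0 < |a - x / y| := (abs_nonneg _).trans_lt h
  filter_upwards [Ioo_mem_nhdsGT one_pos, nhdsWithin_le_nhds
    (eventually_abs_lineMap_div_lineMap_sub_div_lt (x' := x') (y' := y') hy.ne' hδ)]
    with t ⟨ht0, ht1⟩ hclose
  have hv : 0 < (1 - t) * y + t * y' := by
    have : 0 < 1 - t := sub_pos.2 ht1
    positivity
  exact isStepToward_of_abs_sub_lt h (by positivity)
    (lineMap_div_lineMap_sub_div hy.ne' hy'.ne' hv.ne') hclose

theorem weak_efficiency_iff_internal_weak_efficiency_general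
    {n : ℕ} (A : Matrix (Fin n) (Fin n) ℝ)
    (w : Fin n → ℝ) (hw : ∀ i, 0 < w i) :
    (¬ ∃ w' : Fin n → ℝ, (∀ i, 0 < w' i) ∧
        (∀ i j, i ≠ j → |A i j - w' i / w' j| < |A i j - w i / w j|)) ↔
    (¬ ∃ w' : Fin n → ℝ, (∀ i, 0 < w' i) ∧
        (∀ i j, i ≠ j →
          (A i j ≤ w i / w j → A i j ≤ w' i / w' j ∧ w' i / w' j < w i / w j) ∧
          (A i j ≥ w i / w j → A i j ≥ w' i / w' j ∧ w' i / w' j > w i / w j))) := by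
  refine not_congr ⟨fun ⟨w', hw', hlt⟩ => ?_,
    fun ⟨w', hw', hstep⟩ => ⟨w', hw', fun i j hij => IsStepToward.abs_sub_lt (hstep i j hij)⟩⟩
  have hsmall : ∀ᶠ t in 𝓝[>] (0 : ℝ), t ∈ Ioo 0 1 ∧ ∀ i j, i ≠ j →
      IsStepToward (A i j) (w i / w j)
        (((1 - t) * w i + t * w' i) / ((1 - t) * w j + t * w' j)) :=
    Eventually.and (Ioo_mem_nhdsGT one_pos) <| eventually_all.2 fun i => eventually_all.2 fun j =>
      eventually_imp_distrib_left.2 fun hij =>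
        eventually_isStepToward_lineMap_div (hw j) (hw' j) (hlt i j hij)
  obtain ⟨t, ⟨ht0, ht1⟩, hstep⟩ := hsmall.exists
  refine ⟨fun k => (1 - t) * w k + t * w' k, fun k => ?_, hstep⟩
  have : 0 < 1 - t := sub_pos.2 ht1
  have := hw k
  have := hw' k
  positivity

/-- `w` is weakly efficient iff it is internally weakly efficient. -/
theorem weak_efficiency_iff_internal_weak_efficiency
    {n : ℕ} (hn : 3 ≤ n) (A : Matrix (Fin n) (Fin n) ℝ)
    (hApos : ∀ i j, 0 < A i j) (hArec : ∀ i j, A i j = (A j i)⁻¹)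
    (w : Fin n → ℝ) (hw : ∀ i, 0 < w i) :
    (¬ ∃ w' : Fin n → ℝ, (∀ i, 0 < w' i) ∧
        (∀ i j, i ≠ j → |A i j - w' i / w' j| < |A i j - w i / w j|)) ↔
    (¬ ∃ w' : Fin n → ℝ, (∀ i, 0 < w' i) ∧
        (∀ i j, i ≠ j →
          (A i j ≤ w i / w j → A i j ≤ w' i / w' j ∧ w' i / w' j < w i / w j) ∧
          (A i j ≥ w i / w j → A i j ≥ w' i / w' j ∧ w' i / w' j > w i / w j))) :=
  weak_efficiency_iff_internal_weak_efficiency_general A w hw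
end

section
/- Let A be an n×n pairwise comparison matrix (n ≥ 3) and w a positive weight vector. Then w is strongly inefficient for A if and only if there exists a permutation σ of {1,…,n} such that w_{σ(i)}/w_{σ(j)} > a_{σ(i)σ(j)} for all 1 ≤ i < j ≤ n (equivalently, the directed graph with vertex set {1,…,n} and arcs i → j whenever i ≠ j and w_i/w_j ≥ a_ij is isomorphic to the acyclic tournament on n vertices). -/
/-!
Put `u k = w' k / w k`, so that `w' i / w' j = (w i / w j) * (u i / u j)`. If `a_ij < w_i / w_j`,
then `w'` is closer to `a_ij` on the pair `(i, j)` only if it lowers the ratio, i.e. `u i < u j`.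
A pair with `a_ij = w_i / w_j` cannot be improved, and by reciprocity `a_ij > w_i / w_j` means
`a_ji < w_j / w_i`; so an improving `w'` forces an arc between every two indices, always pointing
up along `u`, and sorting the indices by `u` gives the acyclic tournament. Conversely, if the arcs
follow the order `σ`, the multiplier `u (σ k) = t ^ k` with `t > 1` close enough to `1` moves every
ratio strictly towards the corresponding entry of `A`.
-/

open Filter Topology

section Order

variable {α : Type*} [AddCommGroup α] [LinearOrder α] [IsOrderedAddMonoid α]

lemma lt_of_abs_sub_lt_abs_sub {a x y : α} (h : |a - y| < |a - x|) (hax : a < x) : y < x := by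
  rw [abs_sub_comm a x, abs_of_pos (sub_pos.2 hax), abs_sub_comm] at h
  exact (sub_lt_sub_iff_right a).1 ((le_abs_self (y - a)).trans_lt h)

lemma abs_sub_lt_abs_sub_of_lt_of_lt {a x y : α} (hay : a < y) (hyx : y < x) :
    |a - y| < |a - x| := by
  rw [abs_sub_comm a y, abs_sub_comm a x, abs_of_pos (sub_pos.2 hay),
    abs_of_pos (sub_pos.2 (hay.trans hyx))]
  exact sub_lt_sub_right hyx a

lemma abs_sub_lt_abs_sub_of_lt_of_lt' {a x y : α} (hya : y < a) (hxy : x < y) :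
    |a - y| < |a - x| := by
  rw [abs_of_pos (sub_pos.2 hya), abs_of_pos (sub_pos.2 (hxy.trans hya))]
  exact sub_lt_sub_left hxy a

end Order

section Arcs

variable {ι : Type*} {A : Matrix ι ι ℝ} {w w' : ι → ℝ}

lemma lt_or_lt_of_abs_sub_div_lt (hArec : ∀ i j, A i j = (A j i)⁻¹) (hw : ∀ i, 0 < w i)
    {i j : ι} (himp : |A i j - w' i / w' j| < |A i j - w i / w j|) :
    A i j < w i / w j ∨ A j i < w j / w i := by
  rcases lt_trichotomy (A i j) (w i / w j) with h | h | h
  · exact .inl h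
  · rw [h, sub_self, abs_zero] at himp
    exact absurd himp (abs_nonneg _).not_gt
  · right
    rw [hArec j i, ← inv_div]
    exact inv_strictAnti₀ (div_pos (hw i) (hw j)) h

lemma div_lt_div_of_abs_sub_div_lt (hw : ∀ i, 0 < w i) (hw' : ∀ i, 0 < w' i) {i j : ι}
    (himp : |A i j - w' i / w' j| < |A i j - w i / w j|) (h : A i j < w i / w j) :
    w' i / w i < w' j / w j := by
  have hratio := lt_of_abs_sub_lt_abs_sub himp h
  rw [div_lt_div_iff₀ (hw' j) (hw j)] at hratio
  rw [div_lt_div_iff₀ (hw i) (hw j)]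
  linarith

lemma abs_sub_div_lt_of_lt_of_lt_swap (hApos : ∀ i j, 0 < A i j)
    (hArec : ∀ i j, A i j = (A j i)⁻¹) (hw' : ∀ i, 0 < w' i) {i j : ι}
    (hlow : A j i < w' j / w' i) (hup : w' j / w' i < w j / w i) :
    |A i j - w' i / w' j| < |A i j - w i / w j| := by
  rw [hArec i j, ← inv_div (w' j), ← inv_div (w j)]
  exact abs_sub_lt_abs_sub_of_lt_of_lt' (inv_strictAnti₀ (hApos j i) hlow)
    (inv_strictAnti₀ (div_pos (hw' j) (hw' i)) hup)

end Arcs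

section Tournament

variable {n : ℕ} {A : Matrix (Fin n) (Fin n) ℝ} {w : Fin n → ℝ}

lemma exists_perm_lt_div_of_abs_sub_div_lt (hArec : ∀ i j, A i j = (A j i)⁻¹)
    (hw : ∀ i, 0 < w i) {w' : Fin n → ℝ} (hw' : ∀ i, 0 < w' i)
    (himp : ∀ i j, i ≠ j → |A i j - w' i / w' j| < |A i j - w i / w j|) :
    ∃ σ : Equiv.Perm (Fin n), ∀ i j, i < j → A (σ i) (σ j) < w (σ i) / w (σ j) := by
  let u : Fin n → ℝ := fun k => w' k / w k
  refine ⟨Tuple.sort u, fun i j hij => ?_⟩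
  have hne : Tuple.sort u i ≠ Tuple.sort u j := (Tuple.sort u).injective.ne hij.ne
  refine (lt_or_lt_of_abs_sub_div_lt hArec hw (himp _ _ hne)).resolve_right fun hback => ?_
  have hdown := div_lt_div_of_abs_sub_div_lt hw hw' (himp _ _ hne.symm) hback
  exact hdown.not_ge (Tuple.monotone_sort u hij.le)

lemma exists_abs_sub_div_lt_of_lt_div (hApos : ∀ i j, 0 < A i j)
    (hArec : ∀ i j, A i j = (A j i)⁻¹) (hw : ∀ i, 0 < w i)
    (harc : ∀ i j, i < j → A i j < w i / w j) :
    ∃ w' : Fin n → ℝ, (∀ i, 0 < w' i) ∧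
      ∀ i j, i ≠ j → |A i j - w' i / w' j| < |A i j - w i / w j| := by
  have hnear : ∀ᶠ t in 𝓝 (1 : ℝ), ∀ i j : Fin n, i < j →
      A i j < w i / w j * (t ^ (i : ℕ) / t ^ (j : ℕ)) := by
    simp only [eventually_all]
    intro i j hij
    have hcont : ContinuousAt (fun t : ℝ => w i / w j * (t ^ (i : ℕ) / t ^ (j : ℕ))) 1 := by
      fun_prop (disch := norm_num)
    exact hcont.tendsto.eventually_const_lt (by simpa using harc i j hij)
  obtain ⟨t, ht, hA⟩ := hnear.exists_gt
  have hratio : ∀ i j : Fin n,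
      w i * t ^ (i : ℕ) / (w j * t ^ (j : ℕ)) = w i / w j * (t ^ (i : ℕ) / t ^ (j : ℕ)) :=
    fun i j => mul_div_mul_comm _ _ _ _
  have hlt : ∀ i j : Fin n, i < j → w i / w j * (t ^ (i : ℕ) / t ^ (j : ℕ)) < w i / w j :=
    fun i j hij => mul_lt_of_lt_one_right (div_pos (hw i) (hw j))
      ((div_lt_one (by positivity)).2 (pow_lt_pow_right₀ ht hij))
  have hw' : ∀ i : Fin n, 0 < w i * t ^ (i : ℕ) := fun i => by have := hw i; positivity
  refine ⟨fun k => w k * t ^ (k : ℕ), hw', fun i j hij => ?_⟩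
  rcases hij.lt_or_gt with hij | hji
  · rw [hratio]
    exact abs_sub_lt_abs_sub_of_lt_of_lt (hA i j hij) (hlt i j hij)
  · refine abs_sub_div_lt_of_lt_of_lt_swap hApos hArec hw' ?_ ?_ <;> rw [hratio]
    exacts [hA j i hji, hlt j i hji]

lemma exists_abs_sub_div_lt_of_perm_lt_div (hApos : ∀ i j, 0 < A i j)
    (hArec : ∀ i j, A i j = (A j i)⁻¹) (hw : ∀ i, 0 < w i) (σ : Equiv.Perm (Fin n))
    (harc : ∀ i j, i < j → A (σ i) (σ j) < w (σ i) / w (σ j)) :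
    ∃ w' : Fin n → ℝ, (∀ i, 0 < w' i) ∧
      ∀ i j, i ≠ j → |A i j - w' i / w' j| < |A i j - w i / w j| := by
  obtain ⟨v, hv, himp⟩ := exists_abs_sub_div_lt_of_lt_div (A := A.submatrix σ σ) (w := w ∘ σ)
    (fun i j => hApos _ _) (fun i j => hArec _ _) (fun i => hw _) harc
  refine ⟨v ∘ σ.symm, fun i => hv _, fun i j hij => ?_⟩
  simpa using himp (σ.symm i) (σ.symm j) (σ.symm.injective.ne hij)

end Tournament

theorem strongly_inefficient_iff_acyclic_tournament_general
    {n : ℕ} (A : Matrix (Fin n) (Fin n) ℝ)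
    (hApos : ∀ i j, 0 < A i j) (hArec : ∀ i j, A i j = (A j i)⁻¹)
    (w : Fin n → ℝ) (hw : ∀ i, 0 < w i) :
    (∃ w' : Fin n → ℝ, (∀ i, 0 < w' i) ∧
        (∀ i j, i ≠ j → |A i j - w' i / w' j| < |A i j - w i / w j|)) ↔
    (∃ σ : Equiv.Perm (Fin n), ∀ i j : Fin n, i < j →
        A (σ i) (σ j) < w (σ i) / w (σ j)) := by
  constructor
  · rintro ⟨w', hw', himp⟩
    exact exists_perm_lt_div_of_abs_sub_div_lt hArec hw hw' himp
  · rintro ⟨σ, harc⟩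
    exact exists_abs_sub_div_lt_of_perm_lt_div hApos hArec hw σ harc

/-- `w` is strongly inefficient iff after a permutation the associated
digraph is the acyclic tournament: `w σi / w σj > A σi σj` for all `i < j`. -/
theorem strongly_inefficient_iff_acyclic_tournament
    {n : ℕ} (hn : 3 ≤ n) (A : Matrix (Fin n) (Fin n) ℝ)
    (hApos : ∀ i j, 0 < A i j) (hArec : ∀ i j, A i j = (A j i)⁻¹)
    (w : Fin n → ℝ) (hw : ∀ i, 0 < w i) :
    (∃ w' : Fin n → ℝ, (∀ i, 0 < w' i) ∧
        (∀ i j, i ≠ j → |A i j - w' i / w' j| < |A i j - w i / w j|)) ↔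
    (∃ σ : Equiv.Perm (Fin n), ∀ i j : Fin n, i < j →
        A (σ i) (σ j) < w (σ i) / w (σ j)) :=
  strongly_inefficient_iff_acyclic_tournament_general A hApos hArec w hw
end

section
/- Let A be an n×n pairwise comparison matrix (n ≥ 3) and w a positive weight vector. If there exist three distinct indices i, j, k with w_i/w_j > a_ij, w_j/w_k > a_jk, and w_k/w_i > a_ki (i.e., the associated directed graph contains a directed 3-cycle of strict arcs), then w is weakly efficient for A; that is, no positive vector w′ satisfies |a_pq − w′_p/w′_q| < |a_pq − w_p/w_q| for all p ≠ q. -/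
/-! Moving `w` to `w'` must strictly decrease each of the three ratios `w i / w j`, `w j / w k`,
`w k / w i` on the strict arcs of the cycle, since each of them lies strictly above its entry of
`A` and can only get closer to it from below. But around any cycle the ratios multiply to `1`,
for `w` and `w'` alike, so the three products cannot compare strictly. -/

lemma lt_of_abs_sub_lt_abs_sub_of_lt {α : Type*} [AddCommGroup α] [LinearOrder α]
    [IsOrderedAddMonoid α] {a x y : α} (hax : a < x) (h : |a - y| < |a - x|) : y < x := by
  rw [abs_of_neg (sub_neg.2 hax), neg_sub] at h
  exact (sub_lt_sub_iff_right a).1 (abs_sub_lt_iff.1 h).2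

lemma div_mul_div_mul_div_cancel {K : Type*} [Field K] {a b c : K} (ha : a ≠ 0) (hb : b ≠ 0)
    (hc : c ≠ 0) : a / b * (b / c) * (c / a) = 1 := by
  field_simp

lemma not_ratios_lt_around_triangle {K : Type*} [Field K] [LinearOrder K] [IsStrictOrderedRing K]
    {ι : Type*} {w w' : ι → K} (hw : ∀ i, 0 < w i) (hw' : ∀ i, 0 < w' i) (i j k : ι) :
    ¬ (w' i / w' j < w i / w j ∧ w' j / w' k < w j / w k ∧ w' k / w' i < w k / w i) := by
  rintro ⟨hij, hjk, hki⟩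
  have hij₀ := (div_pos (hw' i) (hw' j)).le
  have hjk₀ := (div_pos (hw' j) (hw' k)).le
  have hprod := mul_lt_mul'' (mul_lt_mul'' hij hjk hij₀ hjk₀) hki (mul_nonneg hij₀ hjk₀)
    (div_pos (hw' k) (hw' i)).le
  rw [div_mul_div_mul_div_cancel (hw i).ne' (hw j).ne' (hw k).ne',
    div_mul_div_mul_div_cancel (hw' i).ne' (hw' j).ne' (hw' k).ne'] at hprod
  exact hprod.false

theorem three_cycle_implies_weak_efficiency_general
    {n : ℕ} (A : Matrix (Fin n) (Fin n) ℝ)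
    (w : Fin n → ℝ) (hw : ∀ i, 0 < w i)
    (i j k : Fin n) (hij : i ≠ j) (hjk : j ≠ k) (hki : k ≠ i)
    (h1 : A i j < w i / w j) (h2 : A j k < w j / w k) (h3 : A k i < w k / w i) :
    ¬ ∃ w' : Fin n → ℝ, (∀ i, 0 < w' i) ∧
        (∀ p q, p ≠ q → |A p q - w' p / w' q| < |A p q - w p / w q|) := by
  rintro ⟨w', hw', hcloser⟩
  exact not_ratios_lt_around_triangle hw hw' i j k
    ⟨lt_of_abs_sub_lt_abs_sub_of_lt h1 (hcloser i j hij),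
      lt_of_abs_sub_lt_abs_sub_of_lt h2 (hcloser j k hjk),
      lt_of_abs_sub_lt_abs_sub_of_lt h3 (hcloser k i hki)⟩

/-- A strict directed 3-cycle in the associated digraph implies
weak efficiency of `w`. -/
theorem three_cycle_implies_weak_efficiency
    {n : ℕ} (hn : 3 ≤ n) (A : Matrix (Fin n) (Fin n) ℝ)
    (hApos : ∀ i j, 0 < A i j) (hArec : ∀ i j, A i j = (A j i)⁻¹)
    (w : Fin n → ℝ) (hw : ∀ i, 0 < w i)
    (i j k : Fin n) (hij : i ≠ j) (hjk : j ≠ k) (hki : k ≠ i)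
    (h1 : A i j < w i / w j) (h2 : A j k < w j / w k) (h3 : A k i < w k / w i) :
    ¬ ∃ w' : Fin n → ℝ, (∀ i, 0 < w' i) ∧
        (∀ p q, p ≠ q → |A p q - w' p / w' q| < |A p q - w p / w q|) :=
  three_cycle_implies_weak_efficiency_general A w hw i j k hij hjk hki h1 h2 h3
end

section
/- Let A be an n×n pairwise comparison matrix (n ≥ 3), let w be a positive weight vector, and let λ ∈ ℝ with λ ≥ n satisfy A·w = λ·w (in particular this holds when w is the principal right eigenvector of A, since the Perron eigenvalue of a pairwise comparison matrix is at least n). Then w is weakly efficient for A. -/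
/-!
Let `w'` be any positive vector and choose `i` minimising `w'ₖ / wₖ`. Then `w'ᵢ / w'ⱼ ≤ wᵢ / wⱼ`
for every `j`, so `w'` can only approximate `aᵢⱼ` strictly better than `w` if `aᵢⱼ < wᵢ / wⱼ`
for all `j ≠ i`. Since `aᵢᵢ = 1`, row `i` of `A w = λ w` would then give `λ wᵢ < n wᵢ`,
contradicting `λ ≥ n`.
-/

open Finset Matrix

variable {K : Type*} [Field K] [LinearOrder K] [IsStrictOrderedRing K]

lemma eq_one_of_pos_of_eq_inv {x : K} (hx : 0 < x) (h : x = x⁻¹) : x = 1 := by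
  have hsq : x * x = 1 := by
    nth_rewrite 2 [h]
    exact mul_inv_cancel₀ hx.ne'
  rcases mul_self_eq_one_iff.mp hsq with h1 | h1
  · exact h1
  · linarith

lemma div_le_div_of_div_le_div {a b c d : K} (hb : 0 < b) (hc : 0 < c) (hd : 0 < d)
    (h : a / c ≤ b / d) : a / b ≤ c / d := by
  rw [div_le_div_iff₀ hc hd] at h
  rwa [div_le_div_iff₀ hb hd, mul_comm c]

lemma lt_of_abs_sub_lt_abs_sub_of_le {a r r' : K} (hr : r' ≤ r) (h : |a - r'| < |a - r|) :
    a < r := by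
  by_contra! hra
  rw [abs_of_nonneg (sub_nonneg.mpr hra)] at h
  linarith [le_abs_self (a - r')]

lemma Matrix.eigenvalue_lt_card_of_offDiag_lt {ι : Type*} [Fintype ι] [Nontrivial ι]
    {A : Matrix ι ι K} {w : ι → K} {lam : K} (heig : A *ᵥ w = lam • w) {i : ι}
    (hwi : 0 < w i) (hAii : A i i = 1) (hrow : ∀ j, j ≠ i → A i j * w j < w i) :
    lam < Fintype.card ι := by
  obtain ⟨j, hji⟩ := exists_ne i
  have hrow_le : ∀ j ∈ univ, A i j * w j ≤ w i := fun j _ => by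
    rcases eq_or_ne j i with rfl | hj
    · rw [hAii, one_mul]
    · exact (hrow j hj).le
  have hsum : lam * w i < Fintype.card ι * w i :=
    calc lam * w i = ∑ j, A i j * w j := by
          simpa [Matrix.mulVec, dotProduct] using (congrFun heig i).symm
      _ < ∑ _j : ι, w i := sum_lt_sum hrow_le ⟨j, mem_univ j, hrow j hji⟩
      _ = Fintype.card ι * w i := by rw [sum_const, card_univ, nsmul_eq_mul]
  exact lt_of_mul_lt_mul_right hsum hwi.le

/-- A positive eigenvector of `A` with eigenvalue `λ ≥ n`
(in particular the principal right eigenvector) is weakly efficient. -/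
theorem principal_eigenvector_weakly_efficient
    {n : ℕ} (hn : 3 ≤ n) (A : Matrix (Fin n) (Fin n) ℝ)
    (hApos : ∀ i j, 0 < A i j) (hArec : ∀ i j, A i j = (A j i)⁻¹)
    (w : Fin n → ℝ) (hw : ∀ i, 0 < w i)
    (lam : ℝ) (hlam : (n : ℝ) ≤ lam) (heig : A.mulVec w = lam • w) :
    ¬ ∃ w' : Fin n → ℝ, (∀ i, 0 < w' i) ∧
        (∀ i j, i ≠ j → |A i j - w' i / w' j| < |A i j - w i / w j|) := by
  rintro ⟨w', hw', hbetter⟩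
  have : Nontrivial (Fin n) := Fin.nontrivial_iff_two_le.mpr (by omega)
  obtain ⟨i, hi⟩ := Finite.exists_min fun k => w' k / w k
  have hrow : ∀ j, j ≠ i → A i j * w j < w i := fun j hj =>
    (lt_div_iff₀ (hw j)).mp <| lt_of_abs_sub_lt_abs_sub_of_le
      (div_le_div_of_div_le_div (hw' j) (hw i) (hw j) (hi j)) (hbetter i j hj.symm)
  have hAii : A i i = 1 := eq_one_of_pos_of_eq_inv (hApos i i) (hArec i i)
  have hlt := Matrix.eigenvalue_lt_card_of_offDiag_lt heig (hw i) hAii hrow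
  rw [Fintype.card_fin] at hlt
  linarith
end
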